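/- arXiv:2504.02785 — 2 statements merged into one kernel-verified Lean document; each statement's English description precedes it below -/
import Mathlib

section
/- Bucketing implies fidelity learning for maximally mixed states on a subspace: let P be a rank-r orthogonal projection, ρ = P/r, and let Π be an orthogonal projection with complement Π̄ = I − Π such that ΠρΠ ≽ Π/(2r) and Π̄ρΠ̄ ≼ Π̄/(2r). Then Π has rank exactly r, and setting ρ̂ = Π/r, we have 1 − F(ρ, ρ̂) ≤ tr(Π̄ρΠ̄), where F denotes the (square-root) fidelity. -/
/-!
An operator inequality `c • Q ≼ QAQ` with `c > 0` puts the kernel of `QAQ` inside that of `Q`, so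
`rank Q ≤ rank A`. Applied to `QρQ ≽ Q/(2r)` this gives `rank Q ≤ rank P`; rewritten as
`(1-Q)(1-P)(1-Q)/r ≽ (1-Q)/(2r)`, the second hypothesis gives `rank (1-Q) ≤ rank (1-P)`, hence
`rank Q = rank P = r`. For the fidelity, `√(Q/r) = Q/√r` gives `F(ρ, Q/r) = tr √(QPQ) / r`, and
`0 ≼ QPQ ≼ 1` gives `QPQ ≼ √(QPQ)`; finally `tr (QPQ) + tr ((1-Q)P(1-Q)) = tr P = r`.
-/

open scoped ComplexOrder

open scoped MatrixOrder Matrix.Norms.L2Operator in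
/-- The positive semidefinite square root of a matrix (junk value `0` off the PSD cone). -/
noncomputable def msqrt {d : ℕ} (A : Matrix (Fin d) (Fin d) ℂ) :
    Matrix (Fin d) (Fin d) ℂ :=
  letI := Classical.propDecidable A.PosSemidef
  if h : A.PosSemidef then CFC.sqrt A else 0

/-- The (square-root) fidelity `F(ρ,σ) = tr √(√σ ρ √σ)`, extended to PSD matrices. -/
noncomputable def fid {d : ℕ} (ρ σ : Matrix (Fin d) (Fin d) ℂ) : ℝ :=
  ((msqrt (msqrt σ * ρ * msqrt σ)).trace).re

open scoped MatrixOrder Matrix.Norms.L2Operator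

open Matrix

theorem CFC.le_sqrt_of_le_one {A : Type*} [CStarAlgebra A] [PartialOrder A] [StarOrderedRing A]
    {a : A} (ha₀ : 0 ≤ a) (ha₁ : a ≤ 1) : a ≤ CFC.sqrt a := by
  have hspec : ∀ x ∈ spectrum ℝ a, x ≤ 1 := by
    simpa using (le_algebraMap_iff_spectrum_le (r := (1 : ℝ)) (a := a)).mp (by simpa using ha₁)
  rw [CFC.sqrt_eq_real_sqrt a, cfcₙ_eq_cfc]
  nth_rw 1 [← cfc_id' ℝ a]
  exact cfc_mono fun x hx => Real.le_sqrt_self_iff.mpr (hspec x hx)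

namespace Matrix

variable {n 𝕜 : Type*} [Fintype n] [RCLike 𝕜]

theorem rank_le_rank_of_ker_le {K : Type*} [Field K] {A B : Matrix n n K}
    (h : LinearMap.ker A.mulVecLin ≤ LinearMap.ker B.mulVecLin) : B.rank ≤ A.rank := by
  have hA := LinearMap.finrank_range_add_finrank_ker A.mulVecLin
  have hB := LinearMap.finrank_range_add_finrank_ker B.mulVecLin
  have hker := Submodule.finrank_mono h
  rw [rank, rank]
  omega

theorem PosSemidef.rank_le_rank_of_le {A B : Matrix n n 𝕜} (hB : B.PosSemidef) (h : B ≤ A) :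
    B.rank ≤ A.rank := by
  refine rank_le_rank_of_ker_le fun x hx => ?_
  rw [LinearMap.mem_ker, mulVecLin_apply] at hx ⊢
  have hle : star x ⬝ᵥ B *ᵥ x ≤ 0 := by
    simpa [sub_mulVec, hx] using (le_iff.mp h).dotProduct_mulVec_nonneg x
  exact (hB.dotProduct_mulVec_zero_iff x).mp (le_antisymm hle (hB.dotProduct_mulVec_nonneg x))

theorem rank_le_rank_of_smul_le_mul_mul {Q A : Matrix n n 𝕜} (hQ : IsStarProjection Q)
    {c : 𝕜} (hc : 0 < c) (h : c • Q ≤ Q * A * Q) : Q.rank ≤ A.rank :=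
  calc Q.rank = (c • Q).rank :=
        (rank_smul_of_mem_nonZeroDivisors Q (mem_nonZeroDivisors_of_ne_zero hc.ne')).symm
    _ ≤ (Q * A * Q).rank := (hQ.nonneg.posSemidef.smul hc.le).rank_le_rank_of_le h
    _ ≤ A.rank := (rank_mul_le_left _ _).trans (rank_mul_le_right _ _)

variable [DecidableEq n]

theorem trace_mul_mul_add_trace_one_sub_mul_mul {R : Type*} [CommRing R]
    {Q : Matrix n n R} (hQ : IsIdempotentElem Q) (A : Matrix n n R) :
    (Q * A * Q).trace + ((1 - Q) * A * (1 - Q)).trace = A.trace := by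
  rw [trace_mul_cycle, hQ.eq, trace_mul_cycle, hQ.one_sub.eq, ← trace_add, ← add_mul,
    add_sub_cancel, one_mul]

theorem trace_eq_rank_of_isIdempotentElem {K : Type*} [Field K] [CharZero K]
    {Q : Matrix n n K} (hQ : IsIdempotentElem Q) : Q.trace = Q.rank := by
  have hlin : IsIdempotentElem (toLin' Q) := hQ.map toLinAlgEquiv'
  rw [← trace_toLin'_eq, (LinearMap.IsIdempotentElem.isProj_range _ hlin).trace, rank,
    toLin'_apply']

theorem rank_add_rank_one_sub {K : Type*} [Field K] [CharZero K] {Q : Matrix n n K}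
    (hQ : IsIdempotentElem Q) : Q.rank + (1 - Q).rank = Fintype.card n := by
  apply Nat.cast_injective (R := K)
  push_cast
  rw [← trace_eq_rank_of_isIdempotentElem hQ, ← trace_eq_rank_of_isIdempotentElem hQ.one_sub,
    trace_sub, trace_one, add_sub_cancel]

theorem rank_eq_of_smul_le_mul_mul_of_mul_mul_le_smul {P Q : Matrix n n 𝕜}
    (hP : IsStarProjection P) (hQ : IsStarProjection Q) {c t : 𝕜} (hc : 0 < c) (hct : c < t)
    (hbig : c • Q ≤ Q * (t • P) * Q) (hsmall : (1 - Q) * (t • P) * (1 - Q) ≤ c • (1 - Q)) :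
    Q.rank = P.rank := by
  have ht : t ≠ 0 := (hc.trans hct).ne'
  have hrank : Q.rank ≤ P.rank :=
    (rank_le_rank_of_smul_le_mul_mul hQ hc hbig).trans (rank_smul_of_mem_nonZeroDivisors P
      (mem_nonZeroDivisors_of_ne_zero ht)).le
  have hcompl_le : (t - c) • (1 - Q) ≤ (1 - Q) * (t • (1 - P)) * (1 - Q) := by
    have hE := hQ.one_sub.isIdempotentElem.eq
    generalize 1 - Q = E at hE hsmall ⊢
    rwa [smul_sub, mul_sub, sub_mul, mul_smul_comm t E 1, smul_mul_assoc, mul_one, hE, sub_smul,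
      sub_le_sub_iff_left]
  have hrank_compl : (1 - Q).rank ≤ (1 - P).rank :=
    (rank_le_rank_of_smul_le_mul_mul hQ.one_sub (sub_pos.mpr hct) hcompl_le).trans
      (rank_smul_of_mem_nonZeroDivisors _ (mem_nonZeroDivisors_of_ne_zero ht)).le
  have hP_compl := rank_add_rank_one_sub hP.isIdempotentElem
  have hQ_compl := rank_add_rank_one_sub hQ.isIdempotentElem
  omega

end Matrix

variable {d : ℕ}

theorem msqrt_eq_cfcSqrt (A : Matrix (Fin d) (Fin d) ℂ) : msqrt A = CFC.sqrt A := by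
  by_cases hA : A.PosSemidef
  · exact dif_pos hA
  · rw [msqrt, dif_neg hA, CFC.sqrt_of_not_nonneg (by rwa [nonneg_iff_posSemidef])]

theorem msqrt_smul {A : Matrix (Fin d) (Fin d) ℂ} (hA : A.PosSemidef) {t : ℝ} (ht : 0 ≤ t) :
    msqrt ((t : ℂ) • A) = (√t : ℂ) • msqrt A := by
  rw [msqrt_eq_cfcSqrt, msqrt_eq_cfcSqrt]
  refine CFC.sqrt_unique ?_ ((CFC.sqrt_nonneg A).posSemidef.smul (by positivity)).nonneg
  rw [smul_mul_smul_comm, CFC.sqrt_mul_sqrt_self A hA.nonneg, ← Complex.ofReal_mul,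
    Real.mul_self_sqrt ht]

theorem msqrt_of_isStarProjection {Q : Matrix (Fin d) (Fin d) ℂ} (hQ : IsStarProjection Q) :
    msqrt Q = Q := by
  rw [msqrt_eq_cfcSqrt]
  exact CFC.sqrt_unique hQ.isIdempotentElem.eq hQ.nonneg

theorem fid_smul_smul {ρ σ : Matrix (Fin d) (Fin d) ℂ} (hρ : ρ.PosSemidef) (hσ : σ.PosSemidef)
    {s t : ℝ} (hs : 0 ≤ s) (ht : 0 ≤ t) :
    fid ((s : ℂ) • ρ) ((t : ℂ) • σ) = √(s * t) * fid ρ σ := by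
  have hmid : (msqrt σ * ρ * msqrt σ).PosSemidef := by
    simpa [(CFC.sqrt_nonneg σ).posSemidef.1.eq, msqrt_eq_cfcSqrt] using
      hρ.mul_mul_conjTranspose_same (msqrt σ)
  have hst : msqrt ((t : ℂ) • σ) * ((s : ℂ) • ρ) * msqrt ((t : ℂ) • σ)
      = ((s * t : ℝ) : ℂ) • (msqrt σ * ρ * msqrt σ) := by
    rw [msqrt_smul hσ ht]
    simp only [smul_mul_assoc, mul_smul_comm, smul_smul]
    congr 1
    have hsq : (√t : ℂ) * √t = t := by exact_mod_cast Real.mul_self_sqrt ht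
    push_cast
    linear_combination (s : ℂ) * hsq
  rw [fid, fid, hst, msqrt_smul hmid (mul_nonneg hs ht), trace_smul, smul_eq_mul,
    Complex.re_ofReal_mul]

theorem trace_re_le_fid_of_isStarProjection {P Q : Matrix (Fin d) (Fin d) ℂ}
    (hP : IsStarProjection P) (hQ : IsStarProjection Q) : (Q * P * Q).trace.re ≤ fid P Q := by
  have h₀ : 0 ≤ Q * P * Q := hQ.isSelfAdjoint.conjugate_nonneg hP.nonneg
  have h₁ : Q * P * Q ≤ 1 :=
    calc Q * P * Q ≤ Q * 1 * Q := hQ.isSelfAdjoint.conjugate_le_conjugate hP.le_one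
      _ = Q := by rw [mul_one, hQ.isIdempotentElem.eq]
      _ ≤ 1 := hQ.le_one
  have hle := (tracePositiveLinearMap (Fin d) ℝ ℂ).monotone' (CFC.le_sqrt_of_le_one h₀ h₁)
  rw [fid, msqrt_of_isStarProjection hQ, msqrt_eq_cfcSqrt]
  exact (Complex.le_def.mp hle).1

/-- Bucketing implies fidelity learning for maximally mixed states on a subspace: let `P` be a
rank-`r` orthogonal projection, `ρ = P/r`, and `Q` an orthogonal projection with
`QρQ ≽ Q/(2r)` and `(1−Q)ρ(1−Q) ≼ (1−Q)/(2r)`.  Then `Q` has rank exactly `r` and, setting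
`ρ̂ = Q/r`, one has `1 − F(ρ, ρ̂) ≤ tr((1−Q)ρ(1−Q))`. -/
theorem stmt18 (d r : ℕ) (hr : 0 < r) (P Q : Matrix (Fin d) (Fin d) ℂ)
    (hP : P.IsHermitian) (hPproj : P * P = P) (hPrank : P.rank = r)
    (hQ : Q.IsHermitian) (hQproj : Q * Q = Q)
    (hbig : (Q * ((r : ℂ)⁻¹ • P) * Q - ((2 * r : ℂ))⁻¹ • Q).PosSemidef)
    (hsmall : (((2 * r : ℂ))⁻¹ • (1 - Q) -
        (1 - Q) * ((r : ℂ)⁻¹ • P) * (1 - Q)).PosSemidef) :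
    Q.rank = r ∧
      1 - fid ((r : ℂ)⁻¹ • P) ((r : ℂ)⁻¹ • Q)
        ≤ (((1 - Q) * ((r : ℂ)⁻¹ • P) * (1 - Q)).trace).re := by
  have hPs : IsStarProjection P := ⟨hPproj, hP⟩
  have hQs : IsStarProjection Q := ⟨hQproj, hQ⟩
  have hr_pos : (0 : ℝ) < r := Nat.cast_pos.mpr hr
  have hcast : ((r : ℂ))⁻¹ = (((r : ℝ)⁻¹ : ℝ) : ℂ) := by push_cast; rfl
  have hlt : ((2 * r : ℂ))⁻¹ < (r : ℂ)⁻¹ := by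
    rw [hcast, show ((2 * r : ℂ))⁻¹ = (((2 * r : ℝ))⁻¹ : ℝ) by push_cast; rfl]
    exact_mod_cast inv_strictAnti₀ hr_pos (by linarith : (r : ℝ) < 2 * r)
  refine ⟨(rank_eq_of_smul_le_mul_mul_of_mul_mul_le_smul hPs hQs (by positivity) hlt
    hbig hsmall).trans hPrank, ?_⟩
  have htrace : (Q * P * Q).trace.re + ((1 - Q) * P * (1 - Q)).trace.re = r := by
    rw [← Complex.add_re, trace_mul_mul_add_trace_one_sub_mul_mul hQproj,
      trace_eq_rank_of_isIdempotentElem hPproj, hPrank, Complex.natCast_re]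
  have hF := trace_re_le_fid_of_isStarProjection hPs hQs
  rw [hcast, fid_smul_smul hPs.nonneg.posSemidef hQs.nonneg.posSemidef (by positivity)
    (by positivity), Real.sqrt_mul_self (by positivity), mul_smul_comm, smul_mul_assoc,
    trace_smul, smul_eq_mul, Complex.re_ofReal_mul]
  field_simp
  linarith
end

section
/- Cycle-and-swap trace bound: let k ≥ 1, let τ ∈ S_{2k} be a k-cycle on the odd numbers {1,3,…,2k−1}, and τ' ∈ S_{2k} a k-cycle on the even numbers {2,4,…,2k}. For 0 ≤ j ≤ k−1 and a nonempty subset T ⊆ {1,…,k−j}, set μ = (τ·τ')^{-1} · ∏_{i∈T} SWAP_{2i−1,2i} ∈ S_{2k}. Then in the cycle decomposition of μ, every cycle contains at least two elements that are at most 2(k−j); consequently, for any density matrix σ, tr(P(μ) · I^{⊗2(k−j)} ⊗ σ^{⊗2j}) ≤ d^{k−j−1} · tr(σ^{2j}). -/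
open scoped ComplexOrder

/-- The representation of `S_n` on `(ℂ^d)^{⊗n}` permuting tensor factors. -/
noncomputable def permMatrix (d n : ℕ) (π : Equiv.Perm (Fin n)) :
    Matrix (Fin n → Fin d) (Fin n → Fin d) ℂ :=
  Matrix.of fun f g => if ∀ a, f a = g (π⁻¹ a) then 1 else 0

/-- The tensor product `M₁ ⊗ ⋯ ⊗ M_n` of `d×d` matrices, as a matrix on `(ℂ^d)^{⊗n}`. -/
noncomputable def tensorPow {d n : ℕ} (M : Fin n → Matrix (Fin d) (Fin d) ℂ) :
    Matrix (Fin n → Fin d) (Fin n → Fin d) ℂ :=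
  Matrix.of fun f g => ∏ a, M a (f a) (g a)

/-- The transposition of the pair of positions `(2m, 2m+1)` (0-indexed; this is the pair
`(2i−1, 2i)` in 1-indexed notation with `i = m+1`). -/
def swapAt (k : ℕ) (m : Fin k) : Equiv.Perm (Fin (2 * k)) :=
  Equiv.swap ⟨2 * m.val, by have := m.isLt; omega⟩ ⟨2 * m.val + 1, by have := m.isLt; omega⟩

/-!
Diagonalising `σ`, the trace becomes a sum over colourings of the `2k` positions by eigenvalue
indices that are constant on the cycles of `μ`, hence a product over the cycles `c` of
`tr(σ^{p_c})`, where `p_c` is the number of positions of `c` carrying a `σ`. Chebyshev's sum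
inequality `tr(σ^p) tr(σ^q) ≤ d tr(σ^{p+q})` bounds this by `d^{#cycles - 1} tr(σ^{2j})`.

To count the cycles write `μ = ρ * s` with `ρ = (ττ')⁻¹` and `s` the product of the swaps. `ρ`
preserves parity and `s` flips it exactly on the swapped pairs, so along a cycle of `μ` the parity
flips an even number of times, always at points of swapped pairs. Every cycle meets a swapped
pair, for otherwise it would be a cycle of `ρ`, which is transitive on each parity class. So every
cycle contains two of the first `2(k-j)` positions, and there are at most `k - j` cycles.
-/

open Finset

namespace Equiv.Perm

section Finite

variable {ι : Type*} [Finite ι]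

theorem IsCycleOn.mul_of_forall_apply_eq {τ τ' : Perm ι} {s : Set ι} (hτ : τ.IsCycleOn s)
    (hτ' : ∀ x ∈ s, τ' x = x) : (τ * τ').IsCycleOn s := by
  have heq : Set.EqOn (τ * τ') τ s := fun x hx => by rw [mul_apply, hτ' x hx]
  have hpow : ∀ n : ℕ, ∀ x ∈ s, ((τ * τ') ^ n) x = (τ ^ n) x ∧ (τ ^ n) x ∈ s := by
    intro n x hx
    induction n with
    | zero => exact ⟨rfl, hx⟩
    | succ n ih =>
      rw [pow_succ', mul_apply, ih.1, heq ih.2, pow_succ', mul_apply]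
      exact ⟨rfl, hτ.1.mapsTo ih.2⟩
  refine ⟨hτ.1.congr heq.symm, fun x hx y hy => ?_⟩
  obtain ⟨n, rfl⟩ := (hτ.2 hx hy).exists_nat_pow_eq
  exact ⟨n, by rw [zpow_natCast, (hpow n x hx).1]⟩

theorem SameCycle.exists_mem_of_mul {ρ s : Perm ι} {A : Set ι} (hs : ∀ y ∉ A, s y = y)
    {x y : ι} (hxy : ρ.SameCycle x y) (hy : y ∈ A) : ∃ z ∈ A, (ρ * s).SameCycle x z := by
  by_contra! h
  have hpow : ∀ n : ℕ, ((ρ * s) ^ n) x = (ρ ^ n) x := by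
    intro n
    induction n with
    | zero => rfl
    | succ n ih =>
      have hn : ((ρ * s) ^ n) x ∉ A := fun hA => h _ hA ⟨n, by rw [zpow_natCast]⟩
      rw [pow_succ', mul_apply, mul_apply, hs _ hn, ih, pow_succ', mul_apply]
  obtain ⟨n, rfl⟩ := hxy.exists_nat_pow_eq
  exact h _ hy ⟨n, by rw [zpow_natCast, hpow]⟩

theorem SameCycle.apply_eq_of_forall_apply_eq {β : Type*} {μ : Perm ι} {f : ι → β}
    (hf : ∀ a, f (μ a) = f a) {x y : ι} (hxy : μ.SameCycle x y) : f x = f y := by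
  obtain ⟨n, rfl⟩ := hxy.exists_nat_pow_eq
  induction n with
  | zero => rfl
  | succ n ih => rw [pow_succ', mul_apply, hf, ih ⟨n, by simp⟩]

end Finite

variable {ι : Type*} [Fintype ι] [DecidableEq ι]

theorem SameCycle.exists_ne_of_apply_ne {μ : Perm ι} (c : ι → ZMod 2) {x y : ι}
    (hxy : μ.SameCycle x y) (hy : c (μ y) ≠ c y) :
    ∃ z, μ.SameCycle x z ∧ z ≠ y ∧ c (μ z) ≠ c z := by
  set O : Finset ι := {z | μ.SameCycle x z}
  -- `μ` permutes the cycle `O`, so the changes of `c` along it cancel.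
  have hbal : ∑ z ∈ O, (c (μ z) - c z) = 0 := by
    rw [sum_sub_distrib, sub_eq_zero]
    exact sum_equiv μ (by simp [O]) (fun _ _ => by rfl)
  have hcross : ∀ z, c (μ z) - c z = if c (μ z) ≠ c z then 1 else 0 := by
    intro z
    generalize c (μ z) = a, c z = b
    fin_cases a <;> fin_cases b <;> decide
  simp_rw [hcross] at hbal
  rw [sum_boole, ZMod.natCast_eq_zero_iff] at hbal
  have hyO : y ∈ {z ∈ O | c (μ z) ≠ c z} := by simp [O, hxy, hy]
  have htwo : 1 < #{z ∈ O | c (μ z) ≠ c z} := by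
    have := card_pos.2 ⟨y, hyO⟩
    omega
  obtain ⟨z, hz, hzy⟩ := exists_mem_ne htwo y
  simp only [O, mem_filter, mem_univ, true_and] at hz
  exact ⟨z, hz.1, hzy, hz.2⟩

-- `Quotient.fintype` asks for decidability of `≈`, which instance search does not unfold.
instance (μ : Perm ι) : DecidableRel (α := ι) (SameCycle.setoid μ).r :=
  inferInstanceAs (DecidableRel μ.SameCycle)

theorem sum_prod_ite_eq_prod_cycles {β R : Type*} [Fintype β] [DecidableEq β]
    [CommSemiring R] (μ : Perm ι) (g : ι → β → R) :
    ∑ f : ι → β, ∏ a, (if f (μ a) = f a then g a (f a) else 0) =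
      ∏ c : Quotient (SameCycle.setoid μ), ∑ b, ∏ a with ⟦a⟧ = c, g a b := by
  simp_rw [Fintype.prod_ite_zero]
  rw [← sum_filter, Fintype.prod_sum]
  symm
  calc ∑ F : Quotient (SameCycle.setoid μ) → β, ∏ c, ∏ a with ⟦a⟧ = c, g a (F c)
      = ∑ F : Quotient (SameCycle.setoid μ) → β, ∏ a, g a (F ⟦a⟧) := by
        refine sum_congr rfl fun F _ => ?_
        rw [← prod_fiberwise univ (fun a => (⟦a⟧ : Quotient (SameCycle.setoid μ)))]
        refine prod_congr rfl fun c _ => prod_congr rfl fun a ha => ?_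
        rw [(mem_filter.1 ha).2]
    _ = _ := by
        refine sum_nbij (fun F a => F ⟦a⟧) ?_ ?_ ?_ (fun _ _ => rfl)
        · intro F _
          simp only [mem_filter, mem_univ, true_and]
          exact fun a => congrArg F (Quotient.sound (SameCycle.refl μ a).apply_left)
        · intro F _ F' _ h
          funext c
          induction c using Quotient.inductionOn with
          | h a => exact congrFun h a
        · intro f hf
          simp only [coe_filter, mem_univ, true_and] at hf
          exact ⟨Quotient.lift f fun _ _ => SameCycle.apply_eq_of_forall_apply_eq hf,
            mem_coe.2 (mem_univ _), rfl⟩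

theorem two_mul_card_cycles_le (μ : Perm ι) (P : ι → Prop) [DecidablePred P]
    (h : ∀ x, ∃ a b : ℕ, (μ ^ a) x ≠ (μ ^ b) x ∧ P ((μ ^ a) x) ∧ P ((μ ^ b) x)) :
    2 * Fintype.card (Quotient (SameCycle.setoid μ)) ≤ #{y | P y} := by
  rw [card_eq_sum_card_fiberwise (f := fun y => (⟦y⟧ : Quotient (SameCycle.setoid μ)))
    (t := univ) (fun _ _ => mem_univ _), mul_comm, ← smul_eq_mul, ← card_univ]
  refine card_nsmul_le_sum _ _ _ fun c _ => ?_
  induction c using Quotient.inductionOn with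
  | h x =>
    obtain ⟨a, b, hab, ha, hb⟩ := h x
    have hmem : ∀ m : ℕ, P ((μ ^ m) x) →
        (μ ^ m) x ∈ ({y | P y} : Finset ι).filter
          fun y => (⟦y⟧ : Quotient (SameCycle.setoid μ)) = ⟦x⟧ :=
      fun m hm => mem_filter.2 ⟨mem_filter.2 ⟨mem_univ _, hm⟩,
        Quotient.sound (sameCycle_pow_left.2 (SameCycle.refl μ x))⟩
    exact one_lt_card.2 ⟨_, hmem a ha, _, hmem b hb, hab⟩

end Equiv.Perm

section PairSwaps

variable {k : ℕ}

def pairOf (y : Fin (2 * k)) : Fin k := ⟨y / 2, by omega⟩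

theorem swapAt_apply_val (m : Fin k) (y : Fin (2 * k)) :
    (swapAt k m y : ℕ) =
      if (y : ℕ) = 2 * m then 2 * (m : ℕ) + 1
      else if (y : ℕ) = 2 * m + 1 then 2 * (m : ℕ) else y := by
  simp only [swapAt, Equiv.swap_apply_def, Fin.ext_iff, apply_ite Fin.val]

theorem swapAt_apply_of_pairOf_ne {m : Fin k} {y : Fin (2 * k)} (h : pairOf y ≠ m) :
    swapAt k m y = y := by
  have : (y : ℕ) / 2 ≠ m := fun h' => h (Fin.ext h')
  ext
  rw [swapAt_apply_val]
  split_ifs <;> omega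

theorem pairOf_swapAt (m : Fin k) (y : Fin (2 * k)) : pairOf (swapAt k m y) = pairOf y := by
  have h := swapAt_apply_val m y
  ext
  change (swapAt k m y : ℕ) / 2 = y / 2
  split_ifs at h <;> omega

theorem natCast_swapAt_pairOf (y : Fin (2 * k)) :
    ((swapAt k (pairOf y) y : ℕ) : ZMod 2) = (y : ℕ) + 1 := by
  have h := swapAt_apply_val (pairOf y) y
  have hy : (pairOf y : ℕ) = y / 2 := rfl
  rw [← Nat.cast_succ, ZMod.natCast_eq_natCast_iff']
  split_ifs at h <;> omega

theorem noncommProd_swapAt_apply (T : Finset (Fin k))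
    (hT : (T : Set (Fin k)).Pairwise fun a b => Commute (swapAt k a) (swapAt k b))
    (y : Fin (2 * k)) :
    T.noncommProd (swapAt k) hT y = if pairOf y ∈ T then swapAt k (pairOf y) y else y := by
  induction T using Finset.induction_on with
  | empty => simp
  | @insert m T hm ih =>
    rw [noncommProd_insert_of_notMem _ _ _ _ hm, Equiv.Perm.mul_apply, ih]
    by_cases hy : pairOf y ∈ T
    · have hne : pairOf y ≠ m := fun h => hm (h ▸ hy)
      rw [if_pos hy, if_pos (mem_insert_of_mem hy),
        swapAt_apply_of_pairOf_ne (by rwa [pairOf_swapAt])]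
    · rw [if_neg hy]
      by_cases hym : pairOf y = m
      · rw [if_pos (mem_insert.2 (Or.inl hym)), hym]
      · rw [if_neg (by simp [hym, hy]), swapAt_apply_of_pairOf_ne hym]

theorem exists_sameCycle_pairOf_mem {ρ : Equiv.Perm (Fin (2 * k))}
    (hρ₀ : ρ.IsCycleOn {x | (x : ℕ) % 2 = 0}) (hρ₁ : ρ.IsCycleOn {x | (x : ℕ) % 2 = 1})
    {T : Finset (Fin k)} (hT : T.Nonempty)
    (hcomm : (T : Set (Fin k)).Pairwise fun a b => Commute (swapAt k a) (swapAt k b))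
    (x : Fin (2 * k)) :
    ∃ y z, y ≠ z ∧ (ρ * T.noncommProd (swapAt k) hcomm).SameCycle x y ∧
      (ρ * T.noncommProd (swapAt k) hcomm).SameCycle x z ∧ pairOf y ∈ T ∧ pairOf z ∈ T := by
  have hclass (y : Fin (2 * k)) : ρ.IsCycleOn {x | (x : ℕ) % 2 = (y : ℕ) % 2} := by
    rcases Nat.mod_two_eq_zero_or_one (y : ℕ) with h | h <;> rw [h] <;> assumption
  have hρ (y : Fin (2 * k)) : ((ρ y : ℕ) : ZMod 2) = (y : ℕ) :=
    (ZMod.natCast_eq_natCast_iff' _ _ _).2 ((hclass y).1.mapsTo rfl)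
  have hcross (y : Fin (2 * k)) :
      ((((ρ * T.noncommProd (swapAt k) hcomm) y : ℕ) : ZMod 2) ≠ (y : ℕ) ↔ pairOf y ∈ T) := by
    rw [Equiv.Perm.mul_apply, noncommProd_swapAt_apply, hρ]
    split_ifs with h
    · simp [h, natCast_swapAt_pairOf]
    · simp [h]
  obtain ⟨m, hm⟩ := hT
  let y₀ : Fin (2 * k) := ⟨2 * m + x % 2, by omega⟩
  have hy₀ : pairOf y₀ ∈ T := by
    convert hm
    ext
    simp only [pairOf, y₀]
    omega
  have hxy₀ : ρ.SameCycle x y₀ := (hclass x).2 rfl (by simp [y₀, Nat.add_mod])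
  obtain ⟨y, hyT, hxy⟩ := hxy₀.exists_mem_of_mul (A := {y | pairOf y ∈ T})
    (fun y hy => (noncommProd_swapAt_apply T hcomm y).trans (if_neg hy)) hy₀
  obtain ⟨z, hxz, hzy, hz⟩ := hxy.exists_ne_of_apply_ne
    (fun y : Fin (2 * k) => ((y : ℕ) : ZMod 2)) ((hcross y).2 hyT)
  exact ⟨y, z, hzy.symm, hxy, hxz, hyT, (hcross z).1 hz⟩

theorem exists_pow_ne_lt_of_mul_noncommProd_swapAt {ρ : Equiv.Perm (Fin (2 * k))}
    (hρ₀ : ρ.IsCycleOn {x | (x : ℕ) % 2 = 0}) (hρ₁ : ρ.IsCycleOn {x | (x : ℕ) % 2 = 1})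
    {T : Finset (Fin k)} (hT : T.Nonempty)
    (hcomm : (T : Set (Fin k)).Pairwise fun a b => Commute (swapAt k a) (swapAt k b))
    {N : ℕ} (hTN : ∀ m ∈ T, (m : ℕ) < N) (x : Fin (2 * k)) :
    ∃ a b : ℕ, ((ρ * T.noncommProd (swapAt k) hcomm) ^ a) x ≠
        ((ρ * T.noncommProd (swapAt k) hcomm) ^ b) x ∧
      (((ρ * T.noncommProd (swapAt k) hcomm) ^ a) x : ℕ) < 2 * N ∧
      (((ρ * T.noncommProd (swapAt k) hcomm) ^ b) x : ℕ) < 2 * N := by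
  obtain ⟨y, z, hyz, hy, hz, hyT, hzT⟩ := exists_sameCycle_pairOf_mem hρ₀ hρ₁ hT hcomm x
  obtain ⟨a, rfl⟩ := hy.exists_nat_pow_eq
  obtain ⟨b, rfl⟩ := hz.exists_nat_pow_eq
  have ha : _ / 2 < N := hTN _ hyT
  have hb : _ / 2 < N := hTN _ hzT
  exact ⟨a, b, hyz, by omega, by omega⟩

end PairSwaps

section TensorPow

open Matrix

variable {d n : ℕ}

theorem permMatrix_mul_apply (π : Equiv.Perm (Fin n))
    (M : Matrix (Fin n → Fin d) (Fin n → Fin d) ℂ) (f g : Fin n → Fin d) :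
    (permMatrix d n π * M) f g = M (f ∘ π) g := by
  have key : ∀ h : Fin n → Fin d, (∀ a, f a = h (π⁻¹ a)) ↔ f ∘ π = h := fun h =>
    ⟨fun H => funext fun b => by simpa using H (π b), fun H a => by simp [← H]⟩
  simp only [permMatrix, mul_apply, of_apply, key, ite_mul, one_mul, zero_mul, sum_ite_eq,
    mem_univ, if_true]

theorem mul_permMatrix_apply (π : Equiv.Perm (Fin n))
    (M : Matrix (Fin n → Fin d) (Fin n → Fin d) ℂ) (f g : Fin n → Fin d) :
    (M * permMatrix d n π) f g = M f (fun a => g (π⁻¹ a)) := by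
  simp [permMatrix, mul_apply, ← funext_iff]

theorem trace_permMatrix_mul (π : Equiv.Perm (Fin n))
    (M : Matrix (Fin n → Fin d) (Fin n → Fin d) ℂ) :
    (permMatrix d n π * M).trace = ∑ f, M (f ∘ π) f := by
  simp [trace, permMatrix_mul_apply]

theorem tensorPow_mul (M N : Fin n → Matrix (Fin d) (Fin d) ℂ) :
    tensorPow (fun a => M a * N a) = tensorPow M * tensorPow N := by
  ext f g
  simp only [tensorPow, of_apply, mul_apply, prod_univ_sum, Fintype.piFinset_univ,
    prod_mul_distrib]

theorem tensorPow_one : tensorPow (fun _ : Fin n => (1 : Matrix (Fin d) (Fin d) ℂ)) = 1 := by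
  ext f g
  simp [tensorPow, one_apply, prod_ite_zero, funext_iff]

theorem permMatrix_mul_tensorPow_const (π : Equiv.Perm (Fin n)) (U : Matrix (Fin d) (Fin d) ℂ) :
    permMatrix d n π * tensorPow (fun _ => U) = tensorPow (fun _ => U) * permMatrix d n π := by
  ext f g
  rw [permMatrix_mul_apply, mul_permMatrix_apply]
  simp only [tensorPow, of_apply, Function.comp_apply]
  conv_rhs => rw [← Equiv.prod_comp π]
  simp

theorem trace_permMatrix_mul_tensorPow_conj (π : Equiv.Perm (Fin n))
    (U : unitary (Matrix (Fin d) (Fin d) ℂ)) (M : Fin n → Matrix (Fin d) (Fin d) ℂ) :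
    (permMatrix d n π * tensorPow fun a =>
      (U : Matrix (Fin d) (Fin d) ℂ) * M a * star (U : Matrix (Fin d) (Fin d) ℂ)).trace =
      (permMatrix d n π * tensorPow M).trace := by
  have hU : (tensorPow fun _ : Fin n => star (U : Matrix (Fin d) (Fin d) ℂ)) *
      tensorPow (fun _ => (U : Matrix (Fin d) (Fin d) ℂ)) = 1 := by
    rw [← tensorPow_mul, Unitary.coe_star_mul_self, tensorPow_one]
  rw [tensorPow_mul (fun a => _ * M a), tensorPow_mul (fun _ => (U : Matrix (Fin d) (Fin d) ℂ)),
    ← mul_assoc, ← mul_assoc, trace_mul_comm, permMatrix_mul_tensorPow_const]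
  simp only [← mul_assoc]
  rw [hU, one_mul]

theorem trace_permMatrix_mul_tensorPow_diagonal (π : Equiv.Perm (Fin n))
    (v : Fin n → Fin d → ℂ) :
    (permMatrix d n π * tensorPow fun a => diagonal (v a)).trace =
      ∑ f : Fin n → Fin d, ∏ a, if f (π a) = f a then v a (f a) else 0 := by
  rw [trace_permMatrix_mul]
  simp only [tensorPow, of_apply]
  refine sum_congr rfl fun f _ => prod_congr rfl fun a _ => ?_
  rw [Function.comp_apply, diagonal_apply]
  split_ifs with h <;> simp [h]

theorem Matrix.IsHermitian.pow_eq_conj_diagonal {σ : Matrix (Fin d) (Fin d) ℂ}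
    (hσ : σ.IsHermitian) (q : ℕ) :
    σ ^ q = (hσ.eigenvectorUnitary : Matrix (Fin d) (Fin d) ℂ) *
      diagonal (fun i => (hσ.eigenvalues i : ℂ) ^ q) *
        star (hσ.eigenvectorUnitary : Matrix (Fin d) (Fin d) ℂ) := by
  conv_lhs => rw [hσ.spectral_theorem]
  rw [← map_pow, diagonal_pow, Unitary.conjStarAlgAut_apply]
  rfl

theorem Matrix.IsHermitian.trace_pow {σ : Matrix (Fin d) (Fin d) ℂ} (hσ : σ.IsHermitian)
    (q : ℕ) : (σ ^ q).trace = ((∑ i, hσ.eigenvalues i ^ q : ℝ) : ℂ) := by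
  rw [hσ.pow_eq_conj_diagonal, trace_mul_cycle, Unitary.coe_star_mul_self, one_mul,
    trace_diagonal]
  push_cast
  rfl

theorem trace_permMatrix_mul_tensorPow_pow {σ : Matrix (Fin d) (Fin d) ℂ} (hσ : σ.IsHermitian)
    (μ : Equiv.Perm (Fin n)) (p : Fin n → ℕ) :
    (permMatrix d n μ * tensorPow fun a => σ ^ p a).trace =
      ((∏ c : Quotient (Equiv.Perm.SameCycle.setoid μ),
        ∑ i, hσ.eigenvalues i ^ ∑ a with ⟦a⟧ = c, p a : ℝ) : ℂ) := by
  simp_rw [hσ.pow_eq_conj_diagonal]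
  rw [trace_permMatrix_mul_tensorPow_conj, trace_permMatrix_mul_tensorPow_diagonal,
    Equiv.Perm.sum_prod_ite_eq_prod_cycles μ fun a i => (hσ.eigenvalues i : ℂ) ^ p a]
  push_cast
  simp_rw [prod_pow_eq_pow_sum]

end TensorPow

section PowerSums

variable {κ : Type*} [Fintype κ] {x : κ → ℝ}

theorem sum_pow_mul_sum_pow_le (hx : 0 ≤ x) (a b : ℕ) :
    (∑ i, x i ^ a) * ∑ i, x i ^ b ≤ Fintype.card κ * ∑ i, x i ^ (a + b) := by
  simpa [pow_add] using
    (((monovary_self x).pow_left₀ hx a).pow_right₀ hx b).sum_mul_sum_le_card_mul_sum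

theorem prod_sum_pow_le {α : Type*} (hx : 0 ≤ x) (n : α → ℕ) {s : Finset α} (hs : s.Nonempty) :
    ∏ c ∈ s, ∑ i, x i ^ n c ≤ Fintype.card κ ^ (#s - 1) * ∑ i, x i ^ ∑ c ∈ s, n c := by
  have hpos : ∀ m, 0 ≤ ∑ i, x i ^ m := fun m => sum_nonneg fun i _ => pow_nonneg (hx i) m
  induction hs using Finset.Nonempty.cons_induction with
  | singleton a => simp
  | cons a s ha hs ih =>
    rw [prod_cons, sum_cons, card_cons, Nat.add_sub_cancel]
    calc (∑ i, x i ^ n a) * ∏ c ∈ s, ∑ i, x i ^ n c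
        ≤ (∑ i, x i ^ n a) * (Fintype.card κ ^ (#s - 1) * ∑ i, x i ^ ∑ c ∈ s, n c) := by
          gcongr
          exact hpos _
      _ = Fintype.card κ ^ (#s - 1) * ((∑ i, x i ^ n a) * ∑ i, x i ^ ∑ c ∈ s, n c) := by ring
      _ ≤ Fintype.card κ ^ (#s - 1) * (Fintype.card κ * ∑ i, x i ^ (n a + ∑ c ∈ s, n c)) := by
          gcongr _ * ?_
          exact sum_pow_mul_sum_pow_le hx _ _
      _ = Fintype.card κ ^ #s * ∑ i, x i ^ (n a + ∑ c ∈ s, n c) := by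
          rw [← mul_assoc, ← pow_succ, Nat.sub_add_cancel hs.card_pos]

end PowerSums

theorem re_trace_permMatrix_mul_tensorPow_pow_le {d n : ℕ} {σ : Matrix (Fin d) (Fin d) ℂ}
    (hσ : σ.PosSemidef) (hn : 0 < n) (μ : Equiv.Perm (Fin n)) (p : Fin n → ℕ) {m : ℕ}
    (hm : Fintype.card (Quotient (Equiv.Perm.SameCycle.setoid μ)) ≤ m + 1) :
    (permMatrix d n μ * tensorPow fun a => σ ^ p a).trace.re ≤
      (d : ℝ) ^ m * (σ ^ ∑ a, p a).trace.re := by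
  have hne : (univ : Finset (Quotient (Equiv.Perm.SameCycle.setoid μ))).Nonempty :=
    ⟨⟦⟨0, hn⟩⟧, mem_univ _⟩
  rw [trace_permMatrix_mul_tensorPow_pow hσ.1, hσ.1.trace_pow, Complex.ofReal_re,
    Complex.ofReal_re]
  calc
    _ ≤ (d : ℝ) ^ (Fintype.card (Quotient (Equiv.Perm.SameCycle.setoid μ)) - 1) *
        ∑ i, hσ.1.eigenvalues i ^ ∑ a, p a := by
      have := prod_sum_pow_le hσ.eigenvalues_nonneg (fun c => ∑ a with ⟦a⟧ = c, p a) hne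
      rwa [sum_fiberwise, card_univ, Fintype.card_fin] at this
    _ ≤ _ := by
      rcases Nat.eq_zero_or_pos d with rfl | hd
      · simp
      · gcongr
        · exact sum_nonneg fun i _ => pow_nonneg (hσ.eigenvalues_nonneg i) _
        · exact_mod_cast hd
        · omega

theorem stmt19_general (d k j : ℕ)
    (τ τ' : Equiv.Perm (Fin (2 * k)))
    (hτ : τ.IsCycleOn {x : Fin (2 * k) | (x : ℕ) % 2 = 0})
    (hτfix : ∀ x : Fin (2 * k), (x : ℕ) % 2 = 1 → τ x = x)
    (hτ' : τ'.IsCycleOn {x : Fin (2 * k) | (x : ℕ) % 2 = 1})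
    (hτ'fix : ∀ x : Fin (2 * k), (x : ℕ) % 2 = 0 → τ' x = x)
    (T : Finset (Fin k)) (hT : T.Nonempty) (hTsub : ∀ m ∈ T, (m : ℕ) < k - j)
    (hcomm : (T : Set (Fin k)).Pairwise fun a b => Commute (swapAt k a) (swapAt k b))
    (μ : Equiv.Perm (Fin (2 * k)))
    (hμ : μ = (τ * τ')⁻¹ * Finset.noncommProd T (swapAt k) hcomm)
    (σ : Matrix (Fin d) (Fin d) ℂ) (hσ : σ.PosSemidef) :
    (∀ x : Fin (2 * k), ∃ a b : ℕ, (μ ^ a) x ≠ (μ ^ b) x ∧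
        (((μ ^ a) x : Fin (2 * k)) : ℕ) < 2 * (k - j) ∧
        (((μ ^ b) x : Fin (2 * k)) : ℕ) < 2 * (k - j)) ∧
      ((permMatrix d (2 * k) μ *
          tensorPow fun p : Fin (2 * k) =>
            if (p : ℕ) < 2 * (k - j) then (1 : Matrix (Fin d) (Fin d) ℂ) else σ).trace).re
        ≤ (d : ℝ) ^ (k - j - 1) * ((σ ^ (2 * j)).trace).re := by
  obtain ⟨m₀, hm₀⟩ := hT
  have hjk : j < k := by have := hTsub m₀ hm₀; omega
  have hdisj : τ.Disjoint τ' := fun x =>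
    (Nat.mod_two_eq_zero_or_one x).elim (fun h => .inr (hτ'fix x h)) (fun h => .inl (hτfix x h))
  have hρ₀ := (hτ.mul_of_forall_apply_eq hτ'fix).inv
  have hρ₁ := (hdisj.commute.eq ▸ hτ'.mul_of_forall_apply_eq hτfix).inv
  have hcyc := hμ ▸ exists_pow_ne_lt_of_mul_noncommProd_swapAt hρ₀ hρ₁ ⟨m₀, hm₀⟩ hcomm hTsub
  refine ⟨hcyc, ?_⟩
  have hcard : Fintype.card (Quotient (Equiv.Perm.SameCycle.setoid μ)) ≤ k - j - 1 + 1 := by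
    have := μ.two_mul_card_cycles_le (fun y => (y : ℕ) < 2 * (k - j)) hcyc
    rw [Fin.card_filter_val_lt] at this
    omega
  have hσp : (fun a : Fin (2 * k) => if (a : ℕ) < 2 * (k - j) then 1 else σ) =
      fun a : Fin (2 * k) => σ ^ if (a : ℕ) < 2 * (k - j) then 0 else 1 := by
    funext a
    split_ifs <;> simp
  have hsum : ∑ a : Fin (2 * k), (if (a : ℕ) < 2 * (k - j) then 0 else 1) = 2 * j := by
    rw [sum_ite, sum_const_zero, zero_add, sum_const, smul_eq_mul, mul_one, filter_not, card_sdiff,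
      inter_univ, Fin.card_filter_val_lt, card_univ, Fintype.card_fin]
    omega
  rw [hσp, ← hsum]
  exact re_trace_permMatrix_mul_tensorPow_pow_le hσ (by omega) μ _ hcard

/-- Cycle-and-swap trace bound.  Let `τ ∈ S_{2k}` be a `k`-cycle on the odd positions (in
1-indexed notation; 0-indexed these have even residue) and `τ'` a `k`-cycle on the even
positions, let `0 ≤ j ≤ k−1`, `T` a nonempty set of indices below `k−j`, and
`μ = (τ·τ')⁻¹ · ∏_{i∈T} SWAP_{2i−1,2i}`.  Then every cycle of `μ` contains at least two
elements among the first `2(k−j)` positions, and for any density matrix `σ`,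
`tr(P(μ) · I^{⊗2(k−j)} ⊗ σ^{⊗2j}) ≤ d^{k−j−1} · tr(σ^{2j})`. -/
theorem stmt19 (d k j : ℕ) (hk : 1 ≤ k) (hj : j ≤ k - 1)
    (τ τ' : Equiv.Perm (Fin (2 * k)))
    (hτ : τ.IsCycleOn {x : Fin (2 * k) | (x : ℕ) % 2 = 0})
    (hτfix : ∀ x : Fin (2 * k), (x : ℕ) % 2 = 1 → τ x = x)
    (hτ' : τ'.IsCycleOn {x : Fin (2 * k) | (x : ℕ) % 2 = 1})
    (hτ'fix : ∀ x : Fin (2 * k), (x : ℕ) % 2 = 0 → τ' x = x)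
    (T : Finset (Fin k)) (hT : T.Nonempty) (hTsub : ∀ m ∈ T, (m : ℕ) < k - j)
    (hcomm : (T : Set (Fin k)).Pairwise fun a b => Commute (swapAt k a) (swapAt k b))
    (μ : Equiv.Perm (Fin (2 * k)))
    (hμ : μ = (τ * τ')⁻¹ * Finset.noncommProd T (swapAt k) hcomm)
    (σ : Matrix (Fin d) (Fin d) ℂ) (hσ : σ.PosSemidef) (htr : σ.trace = 1) :
    (∀ x : Fin (2 * k), ∃ a b : ℕ, (μ ^ a) x ≠ (μ ^ b) x ∧
        (((μ ^ a) x : Fin (2 * k)) : ℕ) < 2 * (k - j) ∧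
        (((μ ^ b) x : Fin (2 * k)) : ℕ) < 2 * (k - j)) ∧
      ((permMatrix d (2 * k) μ *
          tensorPow fun p : Fin (2 * k) =>
            if (p : ℕ) < 2 * (k - j) then (1 : Matrix (Fin d) (Fin d) ℂ) else σ).trace).re
        ≤ (d : ℝ) ^ (k - j - 1) * ((σ ^ (2 * j)).trace).re :=
  stmt19_general d k j τ τ' hτ hτfix hτ' hτ'fix T hT hTsub hcomm μ hμ σ hσ
end
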